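/- The function f(p) = -(1 - γp)·log(p) is strictly convex on the open interval (0,1) for every γ > 0. -/

import Mathlib

open Real Set

theorem strictConvexOn_neg_one_sub_mul_mul_log {γ : ℝ} (hγ : 0 ≤ γ) :
    StrictConvexOn ℝ (Ioi 0) (fun p => -(1 - γ * p) * log p) := by
  have hsplit : (fun p => -(1 - γ * p) * log p) = fun p => -log p + γ • (p * log p) := by
    funext p
    simp only [smul_eq_mul]
    ring
  rw [hsplit]
  exact strictConcaveOn_log_Ioi.neg.add_convexOn
    ((convexOn_mul_log.subset Ioi_subset_Ici_self (convex_Ioi 0)).smul hγ)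

theorem convex_focal_loss_strictConvex (γ : ℝ) (hγ : 0 < γ) :
    StrictConvexOn ℝ (Set.Ioo (0:ℝ) 1) (fun p => -(1 - γ * p) * Real.log p) :=
  (strictConvexOn_neg_one_sub_mul_mul_log hγ.le).subset Ioo_subset_Ioi_self (convex_Ioo 0 1)
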